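/- Assume γ ≠ 4, l ≠ −2 and m ≠ −2. Then z₁² = z₂² = z₃² = id_M; z₁ commutes with s₂ and with s₃; z₂ commutes with s₃; z₃ commutes with s₂; and z₁ ∘ z₂ = τ(2/(l+2), 0), z₁ ∘ z₃ = τ(0, 2/(m+2)), z₂ ∘ z₃ = τ(−2/(l+2), 2/(m+2)). If moreover Δ = 0, then z₂ and z₃ also commute with s₁. -/

import Mathlib

/-!
Writing `φ ⊗ b` for `φ.smulRight b : x ↦ φ x • b`, each `zᵢ` has the form `-id + φᵢ ⊗ b` with
`φᵢ b = 2`, and each `sⱼ` the form `id - fⱼ ⊗ aⱼ`.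
For maps of the first form, `(-id + φ ⊗ b)² = id` and
`(-id + φ ⊗ b)(-id + ψ ⊗ b) = id + (ψ - φ) ⊗ b`, which is a `τ` once `ψ - φ` has the right
coefficients. A map of the first form commutes with one of the second as soon as `φ a = 0` and
`f b = 0`, because then both composites of the rank-one parts vanish. For `s₁` the second
condition reads `f₁ b = Δ = 0`.
-/

noncomputable section

variable {K : Type*} [Field K] [CharZero K]

/-- The linear functional `x ↦ c 0 * x 0 + c 1 * x 1 + c 2 * x 2` on `K³`. -/
def lf (c : Fin 3 → K) : (Fin 3 → K) →ₗ[K] K :=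
  c 0 • LinearMap.proj 0 + c 1 • LinearMap.proj 1 + c 2 • LinearMap.proj 2

/-- `s₁ : x ↦ x − (2x₁ − α x₂ − β x₃)·a₁` where `a₁ = Pi.single 0 1`. -/
def s1 (α β : K) : Module.End K (Fin 3 → K) :=
  LinearMap.id - (lf ![2, -α, -β]).smulRight (Pi.single 0 1)

/-- `s₂ : x ↦ x − (−x₁ + 2x₂ − l·x₃)·a₂`. -/
def s2 (l : K) : Module.End K (Fin 3 → K) :=
  LinearMap.id - (lf ![-1, 2, -l]).smulRight (Pi.single 1 1)

/-- `s₃ : x ↦ x − (−x₁ − m·x₂ + 2x₃)·a₃`. -/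
def s3 (m : K) : Module.End K (Fin 3 → K) :=
  LinearMap.id - (lf ![-1, -m, 2]).smulRight (Pi.single 2 1)

/-- `b = b₁ = (4−γ)a₁ + (l+2)a₂ + (m+2)a₃`, with `γ = l·m`. -/
def bvec (l m : K) : Fin 3 → K := ![4 - l * m, l + 2, m + 2]

/-- `b₂ = (2α+βm)a₁ + (4−β)a₂ + (α+2m)a₃`. -/
def b2vec (α β l m : K) : Fin 3 → K := ![2*α + β*m, 4 - β, α + 2*m]

/-- `b₃ = (2β+αl)a₁ + (β+2l)a₂ + (4−α)a₃`. -/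
def b3vec (α β l m : K) : Fin 3 → K := ![2*β + α*l, β + 2*l, 4 - α]

/-- `τ(λ,μ) : a₁ ↦ a₁ + ω·b, a₂ ↦ a₂ + λ·b, a₃ ↦ a₃ + μ·b`,
where `ω = −(λ(l+2) + μ(m+2))/(4−γ)`. -/
def tau (l m lam mu : K) : Module.End K (Fin 3 → K) :=
  LinearMap.id +
    (lf ![-(lam*(l+2) + mu*(m+2))/(4 - l*m), lam, mu]).smulRight (bvec l m)

/-- `τ` applied to a vector `(λ,μ) ∈ K²`. -/
def tauv (l m : K) (v : K × K) : Module.End K (Fin 3 → K) := tau l m v.1 v.2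

def c1 (α β : K) : K × K := (α, β)
def c2 (l : K) : K × K := (-2, l)
def c3 (m : K) : K × K := (m, -2)

/-- `z₁ : a₁ ↦ −a₁ + (2/(4−γ))·b, a₂ ↦ −a₂, a₃ ↦ −a₃`. -/
def z1 (l m : K) : Module.End K (Fin 3 → K) :=
  -LinearMap.id + (lf ![2/(4 - l*m), 0, 0]).smulRight (bvec l m)

/-- `z₂ : a₂ ↦ −a₂ + (2/(l+2))·b, a₁ ↦ −a₁, a₃ ↦ −a₃`. -/
def z2 (l m : K) : Module.End K (Fin 3 → K) :=
  -LinearMap.id + (lf ![0, 2/(l+2), 0]).smulRight (bvec l m)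

/-- `z₃ : a₃ ↦ −a₃ + (2/(m+2))·b, a₁ ↦ −a₁, a₂ ↦ −a₂`. -/
def z3 (l m : K) : Module.End K (Fin 3 → K) :=
  -LinearMap.id + (lf ![0, 0, 2/(m+2)]).smulRight (bvec l m)

/-- The linear functional `(λ,μ) ↦ c.1·λ + c.2·μ` on `K²`. -/
def lf2 (c : K × K) : (K × K) →ₗ[K] K := c.1 • LinearMap.fst K K K + c.2 • LinearMap.snd K K K

/-- `σ₁(λ,μ) = (λ,μ) − ((λ(l+2)+μ(m+2))/(4−γ))·(α,β)`. -/
def sigma1 (α β l m : K) : Module.End K (K × K) :=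
  LinearMap.id - (lf2 ((l+2)/(4 - l*m), (m+2)/(4 - l*m))).smulRight (α, β)

/-- `σ₂(λ,μ) = (λ,μ) + λ·(−2,l)`. -/
def sigma2 (l : K) : Module.End K (K × K) :=
  LinearMap.id + (LinearMap.fst K K K).smulRight ((-2 : K), l)

/-- `σ₃(λ,μ) = (λ,μ) + μ·(m,−2)`. -/
def sigma3 (m : K) : Module.End K (K × K) :=
  LinearMap.id + (LinearMap.snd K K K).smulRight (m, (-2 : K))

/-- The sequence `u_x` : `u_x(0)=0, u_x(1)=u_x(2)=1, u_x(3)=x−1,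
u_x(n+4) = (x−2)·u_x(n+2) − u_x(n)`. -/
def useq (x : K) : ℕ → K
  | 0 => 0
  | 1 => 1
  | 2 => 1
  | 3 => x - 1
  | (n+4) => (x - 2) * useq x (n+2) - useq x n


namespace LinearMap

variable {R M : Type*} [CommRing R] [AddCommGroup M] [Module R M]

theorem smulRight_mul_smulRight (f g : M →ₗ[R] R) (a b : M) :
    f.smulRight a * g.smulRight b = (f b • g).smulRight a := by
  ext x
  simp [smul_smul, mul_comm]

theorem sub_smulRight (f g : M →ₗ[R] R) (a : M) :
    (f - g).smulRight a = f.smulRight a - g.smulRight a := by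
  ext x
  simp [sub_smul]

theorem neg_id_add_smulRight_mul_neg_id_add_smulRight {φ : M →ₗ[R] R} {b : M} (hφ : φ b = 2)
    (ψ : M →ₗ[R] R) :
    (-id + φ.smulRight b) * (-id + ψ.smulRight b) = id + (ψ - φ).smulRight b := by
  have h : φ.smulRight b * ψ.smulRight b = ψ.smulRight b + ψ.smulRight b := by
    ext x
    simp [hφ, two_smul]
  rw [sub_smulRight, ← Module.End.one_eq_id]
  noncomm_ring [h]

theorem neg_id_add_smulRight_sq {φ : M →ₗ[R] R} {b : M} (hφ : φ b = 2) :
    (-id + φ.smulRight b) ^ 2 = 1 := by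
  rw [sq, neg_id_add_smulRight_mul_neg_id_add_smulRight hφ, sub_self, zero_smulRight, add_zero,
    Module.End.one_eq_id]

theorem commute_neg_id_add_smulRight_id_sub_smulRight {φ f : M →ₗ[R] R} {a b : M}
    (ha : φ a = 0) (hb : f b = 0) :
    Commute (-id + φ.smulRight b) (id - f.smulRight a) := by
  have hφf : φ.smulRight b * f.smulRight a = 0 := by
    rw [smulRight_mul_smulRight, ha, zero_smul, zero_smulRight]
  have hfφ : f.smulRight a * φ.smulRight b = 0 := by
    rw [smulRight_mul_smulRight, hb, zero_smul, zero_smulRight]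
  rw [← Module.End.one_eq_id, Commute, SemiconjBy]
  noncomm_ring
  rw [hφf, hfφ]

end LinearMap

section

omit [CharZero K]

variable {α β l m : K}

theorem lf_apply (c x : Fin 3 → K) : lf c x = c 0 * x 0 + c 1 * x 1 + c 2 * x 2 := rfl

theorem lf_sub (c d : Fin 3 → K) : lf (c - d) = lf c - lf d := by
  refine LinearMap.ext fun x => ?_
  simp only [lf_apply, Pi.sub_apply, LinearMap.sub_apply]
  ring

theorem lf_single (c : Fin 3 → K) (i : Fin 3) : lf c (Pi.single i 1) = c i := by
  fin_cases i <;> simp [lf_apply]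

theorem lf_bvec (c : Fin 3 → K) :
    lf c (bvec l m) = c 0 * (4 - l * m) + c 1 * (l + 2) + c 2 * (m + 2) := rfl

theorem neg_id_add_smulRight_bvec_mul_eq_tau {φ ψ : Fin 3 → K} {lam mu : K}
    (hφ : lf φ (bvec l m) = 2)
    (hψφ : ψ - φ = ![-(lam * (l + 2) + mu * (m + 2)) / (4 - l * m), lam, mu]) :
    (-LinearMap.id + (lf φ).smulRight (bvec l m)) * (-LinearMap.id + (lf ψ).smulRight (bvec l m))
      = tau l m lam mu := by
  rw [LinearMap.neg_id_add_smulRight_mul_neg_id_add_smulRight hφ, ← lf_sub, hψφ, tau]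

theorem z1_sq (hγ : l * m ≠ 4) : z1 l m ^ 2 = 1 :=
  LinearMap.neg_id_add_smulRight_sq <| by simp [lf_bvec, sub_ne_zero.mpr hγ.symm]

theorem z2_sq (hl : l ≠ -2) : z2 l m ^ 2 = 1 :=
  LinearMap.neg_id_add_smulRight_sq <| by simp [lf_bvec, mt eq_neg_iff_add_eq_zero.mpr hl]

theorem z3_sq (hm : m ≠ -2) : z3 l m ^ 2 = 1 :=
  LinearMap.neg_id_add_smulRight_sq <| by simp [lf_bvec, mt eq_neg_iff_add_eq_zero.mpr hm]

theorem commute_z1_s2 : Commute (z1 l m) (s2 l) :=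
  LinearMap.commute_neg_id_add_smulRight_id_sub_smulRight (by simp [lf_single])
    (by simp [lf_bvec]; ring)

theorem commute_z1_s3 : Commute (z1 l m) (s3 m) :=
  LinearMap.commute_neg_id_add_smulRight_id_sub_smulRight (by simp [lf_single])
    (by simp [lf_bvec]; ring)

theorem commute_z2_s3 : Commute (z2 l m) (s3 m) :=
  LinearMap.commute_neg_id_add_smulRight_id_sub_smulRight (by simp [lf_single])
    (by simp [lf_bvec]; ring)

theorem commute_z3_s2 : Commute (z3 l m) (s2 l) :=
  LinearMap.commute_neg_id_add_smulRight_id_sub_smulRight (by simp [lf_single])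
    (by simp [lf_bvec]; ring)

theorem lf_s1_bvec : lf ![2, -α, -β] (bvec l m) = 8 - 2*α - 2*β - 2*(l*m) - (α*l + β*m) := by
  simp [lf_bvec]
  ring

theorem commute_z2_s1 (hΔ : 8 - 2*α - 2*β - 2*(l*m) - (α*l + β*m) = 0) :
    Commute (z2 l m) (s1 α β) :=
  LinearMap.commute_neg_id_add_smulRight_id_sub_smulRight (by simp [lf_single])
    (lf_s1_bvec.trans hΔ)

theorem commute_z3_s1 (hΔ : 8 - 2*α - 2*β - 2*(l*m) - (α*l + β*m) = 0) :
    Commute (z3 l m) (s1 α β) :=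
  LinearMap.commute_neg_id_add_smulRight_id_sub_smulRight (by simp [lf_single])
    (lf_s1_bvec.trans hΔ)

theorem z1_mul_z2 (hγ : l * m ≠ 4) (hl : l ≠ -2) : z1 l m * z2 l m = tau l m (2 / (l + 2)) 0 :=
  neg_id_add_smulRight_bvec_mul_eq_tau (by simp [lf_bvec, sub_ne_zero.mpr hγ.symm]) <| by
    ext i
    fin_cases i <;> simp [neg_div, mt eq_neg_iff_add_eq_zero.mpr hl]

theorem z1_mul_z3 (hγ : l * m ≠ 4) (hm : m ≠ -2) : z1 l m * z3 l m = tau l m 0 (2 / (m + 2)) :=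
  neg_id_add_smulRight_bvec_mul_eq_tau (by simp [lf_bvec, sub_ne_zero.mpr hγ.symm]) <| by
    ext i
    fin_cases i <;> simp [neg_div, mt eq_neg_iff_add_eq_zero.mpr hm]

theorem z2_mul_z3 (hl : l ≠ -2) (hm : m ≠ -2) :
    z2 l m * z3 l m = tau l m (-2 / (l + 2)) (2 / (m + 2)) :=
  neg_id_add_smulRight_bvec_mul_eq_tau (by simp [lf_bvec, mt eq_neg_iff_add_eq_zero.mpr hl]) <| by
    ext i
    fin_cases i <;> simp [neg_div, mt eq_neg_iff_add_eq_zero.mpr hl, mt eq_neg_iff_add_eq_zero.mpr hm]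

end

/-- with `γ ≠ 4`, `l ≠ −2`, `m ≠ −2`: `z₁² = z₂² = z₃² = 1`;
`z₁` commutes with `s₂` and `s₃`; `z₂` commutes with `s₃`; `z₃` commutes with `s₂`;
`z₁z₂ = τ(2/(l+2), 0)`, `z₁z₃ = τ(0, 2/(m+2))`, `z₂z₃ = τ(−2/(l+2), 2/(m+2))`;
and if moreover `Δ = 0` then `z₂` and `z₃` commute with `s₁`. -/
theorem stmt15 (α β l m : K) (hγ : l*m ≠ 4) (hl : l ≠ -2) (hm : m ≠ -2) :
    (z1 l m)^2 = 1 ∧ (z2 l m)^2 = 1 ∧ (z3 l m)^2 = 1 ∧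
    z1 l m * s2 l = s2 l * z1 l m ∧
    z1 l m * s3 m = s3 m * z1 l m ∧
    z2 l m * s3 m = s3 m * z2 l m ∧
    z3 l m * s2 l = s2 l * z3 l m ∧
    z1 l m * z2 l m = tau l m (2/(l+2)) 0 ∧
    z1 l m * z3 l m = tau l m 0 (2/(m+2)) ∧
    z2 l m * z3 l m = tau l m (-2/(l+2)) (2/(m+2)) ∧
    (8 - 2*α - 2*β - 2*(l*m) - (α*l + β*m) = 0 →
      z2 l m * s1 α β = s1 α β * z2 l m ∧ z3 l m * s1 α β = s1 α β * z3 l m) :=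
  ⟨z1_sq hγ, z2_sq hl, z3_sq hm, commute_z1_s2.eq, commute_z1_s3.eq, commute_z2_s3.eq,
    commute_z3_s2.eq, z1_mul_z2 hγ hl, z1_mul_z3 hγ hm, z2_mul_z3 hl hm,
    fun hΔ => ⟨(commute_z2_s1 hΔ).eq, (commute_z3_s1 hΔ).eq⟩⟩

end
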